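/- Let λ ∈ ℚ and suppose Γ satisfies the relation Γ₂₃₃ + δ((1/2)Γ₁₁₁ − 2Γ₁₃₄) + 2λ(y₃Γ₁₁₃ + y₄Γ₁₁₄) = Γ₁₁₃² − Γ₁₁₁Γ₁₃₃ + 2(2Γ₁₃₃Γ₁₃₄ − Γ₁₁₃Γ₃₃₄ − Γ₁₁₄Γ₃₃₃) in ℚ[[y₁,y₂,y₃,y₄,q]]. Then comparing the coefficients of q·y₂²·y₃^δ (with y₁-degree 0) yields δ·(1/2 + 2λ)·c_1(2,δ,0) = 2δ·c_1(2,δ+1,1) − c_1(3,δ+2,0). -/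

import Mathlib

set_option maxHeartbeats 2000000


/- Variables: index `0 ↦ y₁`, `1 ↦ y₂`, `2 ↦ y₃`, `3 ↦ y₄`, `4 ↦ q` in
`ℚ[[y₁,y₂,y₃,y₄,q]] = MvPowerSeries (Fin 5) ℚ`. -/

/-- Formal partial derivative `∂/∂yᵢ` of a multivariate power series. -/
noncomputable def pd (i : Fin 5) (f : MvPowerSeries (Fin 5) ℚ) : MvPowerSeries (Fin 5) ℚ :=
  fun s => ((s i : ℚ) + 1) * MvPowerSeries.coeff (R := ℚ) (s + Finsupp.single i 1) f

/-- Let `λ ∈ ℚ` and suppose `Γ` satisfies the relation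
`Γ₂₃₃ + δ((1/2)Γ₁₁₁ - 2Γ₁₃₄) + 2λ(y₃Γ₁₁₃ + y₄Γ₁₁₄)
  = Γ₁₁₃² - Γ₁₁₁Γ₁₃₃ + 2(2Γ₁₃₃Γ₁₃₄ - Γ₁₁₃Γ₃₃₄ - Γ₁₁₄Γ₃₃₃)`.
Then comparing the coefficients of `q·y₂²·y₃^δ` (with `y₁`-degree 0) yields
`δ(1/2 + 2λ)·c₁(2,δ,0) = 2δ·c₁(2,δ+1,1) - c₁(3,δ+2,0)`. -/
theorem lambda_determination
    (δ : ℕ) (hδ : 1 ≤ δ) (lam : ℚ)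
    (c : ℕ → ℕ → ℕ → ℕ → ℚ) (hc0 : ∀ n₂ n₃ n₄, c 0 n₂ n₃ n₄ = 0)
    (Γ : MvPowerSeries (Fin 5) ℚ)
    (hΓ : ∀ s : Fin 5 →₀ ℕ, MvPowerSeries.coeff (R := ℚ) s Γ =
      c (s 4) (s 1) (s 2) (s 3) * (s 4 : ℚ) ^ (s 0) /
        ((Nat.factorial (s 0) : ℚ) * (Nat.factorial (s 1) : ℚ) *
          (Nat.factorial (s 2) : ℚ) * (Nat.factorial (s 3) : ℚ)))
    (hrel : pd 1 (pd 2 (pd 2 Γ)) +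
        (δ : MvPowerSeries (Fin 5) ℚ) *
          (MvPowerSeries.C (σ := Fin 5) (R := ℚ) (1 / 2) * pd 0 (pd 0 (pd 0 Γ)) -
            2 * pd 0 (pd 2 (pd 3 Γ))) +
        MvPowerSeries.C (σ := Fin 5) (R := ℚ) (2 * lam) *
          (MvPowerSeries.X (2 : Fin 5) * pd 0 (pd 0 (pd 2 Γ)) +
            MvPowerSeries.X (3 : Fin 5) * pd 0 (pd 0 (pd 3 Γ))) =
      (pd 0 (pd 0 (pd 2 Γ))) ^ 2 - (pd 0 (pd 0 (pd 0 Γ))) * (pd 0 (pd 2 (pd 2 Γ))) +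
        2 * (2 * (pd 0 (pd 2 (pd 2 Γ))) * (pd 0 (pd 2 (pd 3 Γ))) -
          (pd 0 (pd 0 (pd 2 Γ))) * (pd 2 (pd 2 (pd 3 Γ))) -
          (pd 0 (pd 0 (pd 3 Γ))) * (pd 2 (pd 2 (pd 2 Γ))))) :
    (δ : ℚ) * (1 / 2 + 2 * lam) * c 1 2 δ 0 =
      2 * (δ : ℚ) * c 1 2 (δ + 1) 1 - c 1 3 (δ + 2) 0 := by
  classical
  obtain ⟨m, rfl⟩ : ∃ m, δ = m + 1 := ⟨δ - 1, (Nat.succ_pred_eq_of_pos hδ).symm⟩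
  have hΓ' : ∀ s : Fin 5 →₀ ℕ, Γ s =
      c (s 4) (s 1) (s 2) (s 3) * (s 4 : ℚ) ^ (s 0) /
        ((Nat.factorial (s 0) : ℚ) * (Nat.factorial (s 1) : ℚ) *
          (Nat.factorial (s 2) : ℚ) * (Nat.factorial (s 3) : ℚ)) := hΓ
  set s₀ : Fin 5 →₀ ℕ :=
    Finsupp.single 1 2 + Finsupp.single 2 (m + 1) + Finsupp.single 4 1 with hs₀
  -- vanishing of triple derivatives in q-degree 0
  have hz : ∀ (i j k : Fin 5), i ≠ 4 → j ≠ 4 → k ≠ 4 → ∀ t : Fin 5 →₀ ℕ, t 4 = 0 →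
      MvPowerSeries.coeff (R := ℚ) t (pd i (pd j (pd k Γ))) = 0 := by
    intro i j k hi hj hk t ht
    simp only [pd, MvPowerSeries.coeff_apply, hΓ']
    simp [Finsupp.add_apply, Finsupp.single_apply, hi, hj, hk, ht, hc0]
  have hs4 : s₀ 4 = 1 := by
    simp [hs₀, Finsupp.add_apply, Finsupp.single_apply]
  have hmul : ∀ f g : MvPowerSeries (Fin 5) ℚ,
      (∀ t : Fin 5 →₀ ℕ, t 4 = 0 → MvPowerSeries.coeff (R := ℚ) t f = 0) →
      (∀ t : Fin 5 →₀ ℕ, t 4 = 0 → MvPowerSeries.coeff (R := ℚ) t g = 0) →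
      MvPowerSeries.coeff (R := ℚ) s₀ (f * g) = 0 := by
    intro f g hf hg
    rw [MvPowerSeries.coeff_mul]
    apply Finset.sum_eq_zero
    rintro ⟨a, b⟩ hab
    rw [Finset.HasAntidiagonal.mem_antidiagonal] at hab
    have hab4 : a 4 + b 4 = 1 := by
      rw [← Finsupp.add_apply, hab, hs4]
    rcases Nat.eq_zero_or_pos (a 4) with h | h
    · simp [hf a h]
    · have hb : b 4 = 0 := by omega
      simp [hg b hb]
  have h1 : MvPowerSeries.coeff (R := ℚ) s₀ (pd 1 (pd 2 (pd 2 Γ))) =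
      3 * ((m : ℚ) + 2) * ((m : ℚ) + 3) * c 1 3 (m + 3) 0 / (6 * (Nat.factorial (m + 3) : ℚ)) := by
    simp only [pd, MvPowerSeries.coeff_apply, hΓ', hs₀]
    simp [Finsupp.single_apply, Nat.factorial]
    ring
  have h2 : MvPowerSeries.coeff (R := ℚ) s₀ (pd 0 (pd 0 (pd 0 Γ))) =
      6 * c 1 2 (m + 1) 0 / (6 * 2 * (Nat.factorial (m + 1) : ℚ)) := by
    simp only [pd, MvPowerSeries.coeff_apply, hΓ', hs₀]
    simp [Finsupp.single_apply, Nat.factorial]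
    ring
  have h3 : MvPowerSeries.coeff (R := ℚ) s₀ (pd 0 (pd 2 (pd 3 Γ))) =
      ((m : ℚ) + 2) * c 1 2 (m + 2) 1 / (2 * (Nat.factorial (m + 2) : ℚ)) := by
    simp only [pd, MvPowerSeries.coeff_apply, hΓ', hs₀]
    simp [Finsupp.single_apply, Nat.factorial]
    ring
  have h4 : MvPowerSeries.coeff (R := ℚ) s₀ (MvPowerSeries.X (2 : Fin 5) * pd 0 (pd 0 (pd 2 Γ))) =
      2 * ((m : ℚ) + 1) * c 1 2 (m + 1) 0 / (4 * (Nat.factorial (m + 1) : ℚ)) := by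
    rw [MvPowerSeries.X, MvPowerSeries.coeff_monomial_mul, if_pos]
    · simp only [pd, MvPowerSeries.coeff_apply, hΓ', hs₀]
      simp [Finsupp.single_apply, Finsupp.tsub_apply, Nat.factorial]
      ring
    · rw [Finsupp.single_le_iff, hs₀]
      simp [Finsupp.single_apply]
  have h5 : MvPowerSeries.coeff (R := ℚ) s₀ (MvPowerSeries.X (3 : Fin 5) * pd 0 (pd 0 (pd 3 Γ))) = 0 := by
    rw [MvPowerSeries.X, MvPowerSeries.coeff_monomial_mul, if_neg]
    rw [Finsupp.single_le_iff, hs₀]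
    simp [Finsupp.single_apply]
  -- vanishing instances
  have z111 := hz 0 0 0 (by decide) (by decide) (by decide)
  have z113 := hz 0 0 2 (by decide) (by decide) (by decide)
  have z114 := hz 0 0 3 (by decide) (by decide) (by decide)
  have z122 := hz 0 2 2 (by decide) (by decide) (by decide)
  have z123 := hz 0 2 3 (by decide) (by decide) (by decide)
  have z222 := hz 2 2 2 (by decide) (by decide) (by decide)
  have z223 := hz 2 2 3 (by decide) (by decide) (by decide)
  have hA : ∀ t : Fin 5 →₀ ℕ, t 4 = 0 →
      MvPowerSeries.coeff (R := ℚ) t (MvPowerSeries.C (σ := Fin 5) (R := ℚ) 2 * pd 0 (pd 2 (pd 2 Γ))) = 0 := by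
    intro t ht
    rw [MvPowerSeries.coeff_C_mul, z122 t ht, mul_zero]
  have hp1 := hmul _ _ z113 z113
  have hp2 := hmul _ _ z111 z122
  have hp3 := hmul _ _ hA z123
  have hp4 := hmul _ _ z113 z223
  have hp5 := hmul _ _ z114 z222
  rw [pow_two] at hrel
  rw [show (2 : MvPowerSeries (Fin 5) ℚ) = MvPowerSeries.C (σ := Fin 5) (R := ℚ) 2 from
    (map_ofNat _ 2).symm] at hrel
  rw [show ((m + 1 : ℕ) : MvPowerSeries (Fin 5) ℚ) = MvPowerSeries.C (σ := Fin 5) (R := ℚ) ((m + 1 : ℕ) : ℚ)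
    from (map_natCast _ _).symm] at hrel
  have H := congrArg (MvPowerSeries.coeff (R := ℚ) s₀) hrel
  simp only [map_add, map_sub, MvPowerSeries.coeff_C_mul, h1, h2, h3, h4, h5,
    hp1, hp2, hp3, hp4, hp5] at H
  have hf3 : (Nat.factorial (m + 3) : ℚ) =
      ((m : ℚ) + 3) * ((m : ℚ) + 2) * ((m : ℚ) + 1) * (Nat.factorial m : ℚ) := by
    push_cast [Nat.factorial_succ]; ring
  have hf2 : (Nat.factorial (m + 2) : ℚ) =
      ((m : ℚ) + 2) * ((m : ℚ) + 1) * (Nat.factorial m : ℚ) := by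
    push_cast [Nat.factorial_succ]; ring
  have hf1 : (Nat.factorial (m + 1) : ℚ) = ((m : ℚ) + 1) * (Nat.factorial m : ℚ) := by
    push_cast [Nat.factorial_succ]; ring
  have hFm : (Nat.factorial m : ℚ) ≠ 0 := by
    exact_mod_cast Nat.factorial_ne_zero m
  have hm1 : ((m : ℚ) + 1) ≠ 0 := by positivity
  have hm2 : ((m : ℚ) + 2) ≠ 0 := by positivity
  have hm3 : ((m : ℚ) + 3) ≠ 0 := by positivity
  rw [hf3, hf2, hf1] at H
  field_simp at H
  push_cast at H
  have key : c 1 3 (m + 3) 0 + ((m : ℚ) + 1) * (1 / 2) * c 1 2 (m + 1) 0 -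
      2 * ((m : ℚ) + 1) * c 1 2 (m + 2) 1 +
      2 * lam * ((m : ℚ) + 1) * c 1 2 (m + 1) 0 = 0 := by
    have hbig : (576 * ((m : ℚ) + 1) ^ 3 * ((m : ℚ) + 2) ^ 2 * ((m : ℚ) + 3) *
        ((Nat.factorial m : ℚ)) ^ 3) ≠ 0 := by positivity
    apply mul_left_cancel₀ hbig
    linear_combination (12 * ((m : ℚ) + 1) ^ 3 * ((m : ℚ) + 2) ^ 2 * ((m : ℚ) + 3) *
        ((Nat.factorial m : ℚ)) ^ 3) * H
  have e1 : m + 1 + 1 = m + 2 := by omega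
  have e2 : m + 1 + 2 = m + 3 := by omega
  rw [e1, e2]
  push_cast
  linear_combination key
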